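/- arXiv:2101.00906 — 2 statements merged into one kernel-verified Lean document; each statement's English description precedes it below -/
import Mathlib

section
/- Let p ∈ (1/2,1) and a_n = Γ(n+p)/(Γ(n)Γ(p+1)). Then the series ∑_{n≥1} 1/a_n² converges, and moreover ∑_{k=n}^∞ 1/a_k² ∼ Γ(p+1)²·n^{1-2p}/(2p-1) as n → ∞. -/
/-!
Euler's limit formula gives `Γ(n + p) ~ Γ(n) n^p`, so `1 / a_n² ~ Γ(p + 1)² n^(-2p)`. For
nonnegative summable sequences, asymptotic equivalence passes to the tails, and by the integral
test the tail `∑_{k ≥ n} k^(-q)` lies between `∫_n^∞ x^(-q) dx = n^(1-q) / (q - 1)` and that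
integral plus `n^(-q)`, hence is equivalent to it for `q = 2p > 1`.
-/

open Filter Asymptotics Set Topology

theorem Asymptotics.IsEquivalent.tsum_nat_add {f g : ℕ → ℝ} (h : f ~[atTop] g)
    (hg : Summable g) (hg0 : ∀ᶠ n in atTop, 0 ≤ g n) :
    (fun n => ∑' k, f (n + k)) ~[atTop] fun n => ∑' k, g (n + k) := by
  have hf : Summable f := h.summable_iff_nat.mpr hg
  have hdiff : (fun n => ∑' k, (f - g) (n + k)) =o[atTop] fun n => ∑' k, g (n + k) := by
    refine IsLittleO.of_bound fun ε hε => ?_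
    obtain ⟨N, hN⟩ := eventually_atTop.mp ((h.isLittleO.bound hε).and hg0)
    filter_upwards [eventually_ge_atTop N] with n hn
    have htail : HasSum (fun k => ε * g (n + k)) (ε * ∑' k, g (n + k)) :=
      (hg.comp_injective (add_right_injective n)).hasSum.mul_left ε
    refine (tsum_of_norm_bounded htail fun k => ?_).trans ?_
    · obtain ⟨hbound, hnonneg⟩ := hN (n + k) (by omega)
      rwa [Real.norm_of_nonneg hnonneg] at hbound
    · exact mul_le_mul_of_nonneg_left (Real.le_norm_self _) hε.le
  exact IsLittleO.isEquivalent <| hdiff.congr_left fun n =>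
    (hf.comp_injective (add_right_injective n)).tsum_sub (hg.comp_injective (add_right_injective n))

theorem integral_Ioi_rpow_neg {q : ℝ} (hq : 1 < q) {c : ℝ} (hc : 0 < c) :
    ∫ x in Ioi c, x ^ (-q) = c ^ (1 - q) / (q - 1) := by
  rw [integral_Ioi_rpow_of_lt (by linarith) hc, neg_div, ← div_neg, neg_add', neg_neg, add_comm,
    ← sub_eq_add_neg]

theorem tsum_nat_add_rpow_neg_mem_Icc {q : ℝ} (hq : 1 < q) {n : ℕ} (hn : 1 ≤ n) :
    ∑' k, ((n + k : ℕ) : ℝ) ^ (-q) ∈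
      Icc ((n : ℝ) ^ (1 - q) / (q - 1)) ((n : ℝ) ^ (-q) + (n : ℝ) ^ (1 - q) / (q - 1)) := by
  have hn0 : (0 : ℝ) < n := by exact_mod_cast hn
  have hanti : AntitoneOn (fun x : ℝ => x ^ (-q)) (Ici (n : ℝ)) := fun x hx y _ hxy =>
    Real.rpow_le_rpow_of_nonpos (hn0.trans_le hx) hxy (by linarith)
  have hnonneg : ∀ x ∈ Ioi (n : ℝ), 0 ≤ x ^ (-q) := fun x hx =>
    Real.rpow_nonneg (hn0.trans hx).le _
  have hsum : Summable fun m : ℕ => (m : ℝ) ^ (-q) := Real.summable_nat_rpow.mpr (by linarith)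
  have lower := hanti.integral_le_tsum_comp_add n hsum hnonneg
  have upper := hanti.tsum_comp_add_le_integral n
    (integrableOn_Ioi_rpow_of_lt (by linarith) hn0) hnonneg
  simp only [add_comm n] at lower upper ⊢
  rw [integral_Ioi_rpow_neg hq hn0] at lower upper
  refine ⟨lower, ?_⟩
  rw [((summable_nat_add_iff n).mpr hsum).tsum_eq_zero_add]
  simpa [add_right_comm _ 1 n] using upper

theorem isEquivalent_tsum_nat_add_rpow_neg {q : ℝ} (hq : 1 < q) :
    (fun n : ℕ => ∑' k, ((n + k : ℕ) : ℝ) ^ (-q))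
      ~[atTop] fun n => (n : ℝ) ^ (1 - q) / (q - 1) := by
  have hdiff : (fun n : ℕ => ∑' k, ((n + k : ℕ) : ℝ) ^ (-q) - (n : ℝ) ^ (1 - q) / (q - 1))
      =O[atTop] fun n => (n : ℝ) ^ (-q) := by
    refine IsBigO.of_bound 1 ?_
    filter_upwards [eventually_ge_atTop 1] with n hn
    obtain ⟨lower, upper⟩ := tsum_nat_add_rpow_neg_mem_Icc hq hn
    rw [Real.norm_of_nonneg (by linarith), Real.norm_of_nonneg (by positivity)]
    linarith
  have hsmall :
      (fun n : ℕ => (n : ℝ) ^ (-q)) =o[atTop] fun n => (n : ℝ) ^ (1 - q) / (q - 1) := by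
    refine isLittleO_iff_exists_eq_mul.mpr
      ⟨fun n => (q - 1) / n, tendsto_const_div_atTop_nhds_zero_nat (q - 1), ?_⟩
    filter_upwards [eventually_ge_atTop 1] with n hn
    have hn0 : (0 : ℝ) < n := by exact_mod_cast hn
    have : q - 1 ≠ 0 := by linarith
    simp only [Pi.mul_apply, Real.rpow_sub hn0, Real.rpow_neg hn0.le, Real.rpow_one]
    field_simp
  exact IsLittleO.isEquivalent (hdiff.trans_isLittleO hsmall)

theorem Real.Gamma_nat_add_eq_mul_prod {p : ℝ} (hp : 0 < p) (m : ℕ) :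
    Real.Gamma (m + p) = Real.Gamma p * ∏ j ∈ Finset.range m, (p + j) := by
  induction m with
  | zero => simp
  | succ m ih =>
    rw [Nat.cast_succ, add_right_comm, Real.Gamma_add_one (by positivity), Finset.prod_range_succ,
      ih]
    ring

theorem Real.isEquivalent_Gamma_nat_add {p : ℝ} (hp : 0 < p) :
    (fun n : ℕ => Real.Gamma (n + p)) ~[atTop] fun n => Real.Gamma n * (n : ℝ) ^ p := by
  refine isEquivalent_of_tendsto_one ?_
  have hΓ : Real.Gamma p ≠ 0 := (Real.Gamma_pos_of_pos hp).ne'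
  -- At `n = m + 1` the ratio is `Γ(p) / GammaSeq p m * (m / (m + 1))^p`.
  have hEuler : Tendsto
      (fun m : ℕ => Real.Gamma p / Real.GammaSeq p m * ((m : ℝ) / (m + 1)) ^ p)
      atTop (𝓝 1) := by
    have hpow : Tendsto (fun m : ℕ => ((m : ℝ) / (m + 1)) ^ p) atTop (𝓝 1) := by
      simpa using (tendsto_natCast_div_add_atTop (1 : ℝ)).rpow_const (p := p) (Or.inl one_ne_zero)
    simpa [hΓ] using
      ((tendsto_const_nhds (x := Real.Gamma p)).div (Real.GammaSeq_tendsto_Gamma p) hΓ).mul hpow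
  rw [← tendsto_add_atTop_iff_nat 1]
  refine hEuler.congr' ?_
  filter_upwards [eventually_ge_atTop 1] with m hm
  have hm0 : (0 : ℝ) < m := by exact_mod_cast hm
  rw [Pi.div_apply, Real.Gamma_nat_add_eq_mul_prod hp, Real.GammaSeq, Nat.cast_succ,
    Real.Gamma_nat_eq_factorial, Real.div_rpow hm0.le (by positivity)]
  field_simp

theorem isEquivalent_inv_sq_Gamma_nat_add_div {p : ℝ} (hp : 0 < p) :
    (fun n : ℕ => 1 / (Real.Gamma (n + p) / (Real.Gamma n * Real.Gamma (p + 1))) ^ 2)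
      ~[atTop] fun n => Real.Gamma (p + 1) ^ 2 * (n : ℝ) ^ (-(2 * p)) := by
  have h := (((Real.isEquivalent_Gamma_nat_add hp).div
    (IsEquivalent.refl (u := fun n : ℕ => Real.Gamma n * Real.Gamma (p + 1)))).pow 2).inv
  refine (h.congr_left (Eventually.of_forall fun n => by simp)).congr_right ?_
  filter_upwards [eventually_ge_atTop 1] with n hn
  have hn0 : (0 : ℝ) < n := by exact_mod_cast hn
  simp only [Pi.inv_apply, Pi.pow_apply, Pi.div_apply, Real.rpow_neg hn0.le, mul_comm 2 p,
    Real.rpow_mul hn0.le, Real.rpow_two]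
  field_simp

theorem stmt2 (p : ℝ) (hp : p ∈ Set.Ioo (1/2 : ℝ) 1) (a : ℕ → ℝ)
    (ha : ∀ n : ℕ, 1 ≤ n → a n = Real.Gamma (n + p) / (Real.Gamma n * Real.Gamma (p + 1))) :
    Summable (fun n : ℕ => 1 / (a (n + 1)) ^ 2) ∧
    Tendsto (fun n : ℕ =>
        (∑' k : ℕ, 1 / (a (n + k)) ^ 2) * (2 * p - 1) /
          (Real.Gamma (p + 1) ^ 2 * (n : ℝ) ^ (1 - 2 * p)))
      atTop (nhds 1) := by
  have hq : 1 < 2 * p := by linarith [hp.1]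
  set C := Real.Gamma (p + 1) ^ 2
  have hterm : (fun n => 1 / (a n) ^ 2) ~[atTop] fun n : ℕ => C * (n : ℝ) ^ (-(2 * p)) :=
    (isEquivalent_inv_sq_Gamma_nat_add_div (by linarith)).congr_left <| by
      filter_upwards [eventually_ge_atTop 1] with n hn
      rw [ha n hn]
  have hsum : Summable fun n : ℕ => C * (n : ℝ) ^ (-(2 * p)) :=
    (Real.summable_nat_rpow.mpr (by linarith)).mul_left C
  refine ⟨(summable_nat_add_iff 1).mpr (hterm.summable_iff_nat.mpr hsum), ?_⟩
  have htail : (fun n => ∑' k, 1 / (a (n + k)) ^ 2)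
      ~[atTop] fun n : ℕ => C * (n : ℝ) ^ (1 - 2 * p) / (2 * p - 1) := by
    refine (hterm.tsum_nat_add hsum (Eventually.of_forall fun n => by positivity)).trans ?_
    simp only [tsum_mul_left, mul_div_assoc]
    exact IsEquivalent.refl.mul (isEquivalent_tsum_nat_add_rpow_neg hq)
  simp only [← div_div_eq_mul_div (c := 2 * p - 1)]
  refine (isEquivalent_iff_tendsto_one ?_).mp htail
  filter_upwards [eventually_gt_atTop 0] with n hn
  have hC : 0 < C := pow_pos (Real.Gamma_pos_of_pos (by linarith)) 2
  exact (div_pos (mul_pos hC (by positivity)) (by linarith)).ne'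
end

section
/- Let p ∈ (1/2,1), let (Ŝ_n) be a one-dimensional step-reinforced random walk with centered typical step X ∈ L²(P), and let a_n = Γ(n+p)/(Γ(n)Γ(p+1)). Then M_n := Ŝ_n/a_n is a mean-zero martingale with respect to F_n = σ(X̂_1,…,X̂_n). -/
open MeasureTheory ProbabilityTheory Filter

/-- Index space for the three independent sources of randomness of a step-reinforced
random walk: the i.i.d. steps (values in `α`), the Bernoulli coins, the uniform picks. -/
def srwSpace (α : Type) : ℕ ⊕ ℕ ⊕ ℕ → Type
  | .inl _ => α
  | .inr (.inl _) => Bool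
  | .inr (.inr _) => ℕ

instance srwSpaceMS (α : Type) [MeasurableSpace α] : ∀ i, MeasurableSpace (srwSpace α i)
  | .inl _ => inferInstanceAs (MeasurableSpace α)
  | .inr (.inl _) => inferInstanceAs (MeasurableSpace Bool)
  | .inr (.inr _) => inferInstanceAs (MeasurableSpace ℕ)

/-- The combined family of random variables `X, ε, U`. -/
def srwFun {Ω : Type*} {α : Type} (X : ℕ → Ω → α) (ε : ℕ → Ω → Bool) (U : ℕ → Ω → ℕ) :
    ∀ i : ℕ ⊕ ℕ ⊕ ℕ, Ω → srwSpace α i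
  | .inl n => X n
  | .inr (.inl n) => ε n
  | .inr (.inr n) => U n

/-!
Let `𝒢ₙ` be the σ-algebra generated by all of `X k, ε k, U k` for `k ≤ n`; it contains `Fₙ`.
On `{ε (n+1), U (n+1) = j}`, an event of probability `p / n` independent of `𝒢ₙ`, the new step
`X̂ (n+1)` repeats `X̂ j`; on `{¬ ε (n+1)}` it is `X (n+1)`, centred and independent of
`𝒢ₙ ∨ σ(ε (n+1))`. Hence `∫_A X̂ (n+1) = (p / n) ∫_A Ŝₙ` for `A ∈ 𝒢ₙ`, i.e.
`∫_A Ŝ (n+1) = ((n + p) / n) ∫_A Ŝₙ`. Since `Γ (x + 1) = x Γ x` gives `a (n+1) = ((n + p) / n) aₙ`,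
`Ŝₙ / aₙ` is a martingale for `𝒢`, and a fortiori for the smaller filtration `F`.
-/

lemma setIntegral_eq_measureReal_mul_of_indep {Ω : Type*} [m0 : MeasurableSpace Ω]
    {μ : Measure Ω} {m₁ m₂ : MeasurableSpace Ω} (h : Indep m₁ m₂ μ) (hm₁ : m₁ ≤ m0)
    (hm₂ : m₂ ≤ m0) {A : Set Ω} (hA : MeasurableSet[m₁] A) {f : Ω → ℝ} (hf : Measurable[m₂] f) :
    ∫ ω in A, f ω ∂μ = μ.real A * ∫ ω, f ω ∂μ :=
  Indep.setIntegral_eq_mul (f := id) hm₁ (indep_of_indep_of_le_right h hf.comap_le)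
    (hf.mono hm₂ le_rfl).aemeasurable hA aestronglyMeasurable_id

section SigmaAlgebras

variable {Ω : Type*} {α : Type} [MeasurableSpace α]
  (X : ℕ → Ω → α) (ε : ℕ → Ω → Bool) (U : ℕ → Ω → ℕ)

abbrev srwSigma (T : Set (ℕ ⊕ ℕ ⊕ ℕ)) : MeasurableSpace Ω :=
  ⨆ i ∈ T, (srwSpaceMS α i).comap (srwFun X ε U i)

def srwTime : ℕ ⊕ ℕ ⊕ ℕ → ℕ := Sum.elim id (Sum.elim id id)

abbrev srwPast (n : ℕ) : MeasurableSpace Ω := srwSigma X ε U {i | srwTime i ≤ n}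

variable {X ε U}

lemma srwSigma_mono : Monotone (srwSigma X ε U) := fun _ _ hST => biSup_mono hST

lemma srwPast_mono : Monotone (srwPast X ε U) :=
  fun _ _ hmn => srwSigma_mono fun _ (hi : srwTime _ ≤ _) => hi.trans hmn

lemma comap_le_srwSigma {T : Set (ℕ ⊕ ℕ ⊕ ℕ)} {i : ℕ ⊕ ℕ ⊕ ℕ} (hi : i ∈ T) :
    (srwSpaceMS α i).comap (srwFun X ε U i) ≤ srwSigma X ε U T :=
  le_iSup₂ (f := fun i _ => (srwSpaceMS α i).comap (srwFun X ε U i)) i hi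

lemma measurable_X_srwSigma {T : Set (ℕ ⊕ ℕ ⊕ ℕ)} {k : ℕ} (hk : .inl k ∈ T) :
    Measurable[srwSigma X ε U T] (X k) :=
  measurable_iff_comap_le.2 (comap_le_srwSigma hk)

lemma measurable_ε_srwSigma {T : Set (ℕ ⊕ ℕ ⊕ ℕ)} {k : ℕ} (hk : .inr (.inl k) ∈ T) :
    Measurable[srwSigma X ε U T] (ε k) :=
  measurable_iff_comap_le.2 (comap_le_srwSigma hk)

lemma measurable_U_srwSigma {T : Set (ℕ ⊕ ℕ ⊕ ℕ)} {k : ℕ} (hk : .inr (.inr k) ∈ T) :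
    Measurable[srwSigma X ε U T] (U k) :=
  measurable_iff_comap_le.2 (comap_le_srwSigma hk)

variable [m0 : MeasurableSpace Ω]

lemma measurable_srwFun (hX : ∀ i, Measurable (X i)) (hε : ∀ i, Measurable (ε i))
    (hU : ∀ i, Measurable (U i)) : ∀ i, Measurable (srwFun X ε U i)
  | .inl k => hX k
  | .inr (.inl k) => hε k
  | .inr (.inr k) => hU k

lemma srwSigma_le (hf : ∀ i, Measurable (srwFun X ε U i)) (T : Set (ℕ ⊕ ℕ ⊕ ℕ)) :
    srwSigma X ε U T ≤ m0 :=
  iSup₂_le fun i _ => (hf i).comap_le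

lemma indep_srwSigma {P : Measure Ω} (hf : ∀ i, Measurable (srwFun X ε U i))
    (hind : iIndepFun (m := fun i => srwSpaceMS α i) (srwFun X ε U) P)
    {T T' : Set (ℕ ⊕ ℕ ⊕ ℕ)} (hTT' : Disjoint T T') :
    Indep (srwSigma X ε U T) (srwSigma X ε U T') P :=
  indep_iSup_of_disjoint (fun i => (hf i).comap_le) ((iIndepFun_iff_iIndep _ _ _).1 hind) hTT'

end SigmaAlgebras

structure IsStepReinforced {Ω : Type*} [MeasurableSpace Ω] (P : Measure Ω) (p : ℝ)
    (X : ℕ → Ω → ℝ) (ε : ℕ → Ω → Bool) (U : ℕ → Ω → ℕ) (Xhat : ℕ → Ω → ℝ) : Prop where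
  measurable_X : ∀ i, Measurable (X i)
  measurable_ε : ∀ i, Measurable (ε i)
  measurable_U : ∀ i, Measurable (U i)
  indep : iIndepFun (m := fun i => srwSpaceMS ℝ i) (srwFun X ε U) P
  integrable_X : ∀ i, Integrable (X i) P
  integral_X : ∀ i, ∫ ω, X i ω ∂P = 0
  prob_ε : ∀ i, 2 ≤ i → P {ω | ε i ω = true} = ENNReal.ofReal p
  U_mem : ∀ i, 2 ≤ i → ∀ ω, U i ω ∈ Finset.Icc 1 (i - 1)
  prob_U : ∀ i, 2 ≤ i → ∀ j ∈ Finset.Icc 1 (i - 1),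
    P {ω | U i ω = j} = ((i - 1 : ℕ) : ENNReal)⁻¹
  Xhat_one : Xhat 1 = X 1
  Xhat_rec : ∀ i, 2 ≤ i → ∀ ω, Xhat i ω = if ε i ω then Xhat (U i ω) ω else X i ω

namespace IsStepReinforced

variable {Ω : Type*} [m0 : MeasurableSpace Ω] {P : Measure Ω} {p : ℝ}
  {X : ℕ → Ω → ℝ} {ε : ℕ → Ω → Bool} {U : ℕ → Ω → ℕ} {Xhat : ℕ → Ω → ℝ}

lemma measurable_srwFun (h : IsStepReinforced P p X ε U Xhat) :
    ∀ i, Measurable (srwFun X ε U i) :=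
  _root_.measurable_srwFun h.measurable_X h.measurable_ε h.measurable_U

lemma Xhat_eq_sum_indicator (h : IsStepReinforced P p X ε U Xhat) {k : ℕ} (hk : 2 ≤ k) :
    Xhat k = ∑ j ∈ Finset.Icc 1 (k - 1), ({ω | ε k ω = true} ∩ {ω | U k ω = j}).indicator (Xhat j)
      + {ω | ε k ω = false}.indicator (X k) := by
  funext ω
  simp only [Finset.sum_apply, Pi.add_apply, Set.indicator_apply, Set.mem_inter_iff,
    Set.mem_ofPred_eq, h.Xhat_rec k hk ω]
  by_cases hε : ε k ω = true
  · simp [hε, h.U_mem k hk ω]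
  · simp [hε]

lemma measurable_Xhat_srwPast (h : IsStepReinforced P p X ε U Xhat) {k n : ℕ}
    (hk : 1 ≤ k) (hkn : k ≤ n) : Measurable[srwPast X ε U n] (Xhat k) := by
  refine Measurable.mono ?_ (srwPast_mono hkn) le_rfl
  clear hkn
  induction k using Nat.strong_induction_on with
  | _ k ih =>
    obtain rfl | hk2 := eq_or_lt_of_le hk
    · rw [h.Xhat_one]
      exact measurable_X_srwSigma (show srwTime (.inl 1) ≤ 1 from le_rfl)
    have hε : Measurable[srwPast X ε U k] (ε k) :=
      measurable_ε_srwSigma (show srwTime (.inr (.inl k)) ≤ k from le_rfl)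
    have hU : Measurable[srwPast X ε U k] (U k) :=
      measurable_U_srwSigma (show srwTime (.inr (.inr k)) ≤ k from le_rfl)
    rw [h.Xhat_eq_sum_indicator hk2, Finset.sum_fn]
    refine .add (Finset.measurable_sum _ fun j hj => ?_) ?_
    · obtain ⟨hj1, hjk⟩ := Finset.mem_Icc.1 hj
      exact ((ih j (by omega) hj1).mono (srwPast_mono (by omega)) le_rfl).indicator
        ((hε (measurableSet_singleton true)).inter (hU (measurableSet_singleton j)))
    · exact (measurable_X_srwSigma (show srwTime (.inl k) ≤ k from le_rfl)).indicator
        (hε (measurableSet_singleton false))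

lemma integrable_Xhat (h : IsStepReinforced P p X ε U Xhat) {k : ℕ} (hk : 1 ≤ k) :
    Integrable (Xhat k) P := by
  induction k using Nat.strong_induction_on with
  | _ k ih =>
    obtain rfl | hk2 := eq_or_lt_of_le hk
    · rw [h.Xhat_one]
      exact h.integrable_X 1
    rw [h.Xhat_eq_sum_indicator hk2]
    refine .add (integrable_finsetSum' _ fun j hj => ?_) ((h.integrable_X k).indicator ?_)
    · obtain ⟨hj1, hjk⟩ := Finset.mem_Icc.1 hj
      exact (ih j (by omega) hj1).indicator
        ((h.measurable_ε k (measurableSet_singleton true)).inter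
          (h.measurable_U k (measurableSet_singleton j)))
    · exact h.measurable_ε k (measurableSet_singleton false)

lemma measureReal_ε_inter_U (h : IsStepReinforced P p X ε U Xhat) (hp : 0 ≤ p) {n j : ℕ}
    (hn : 1 ≤ n) (hj : j ∈ Finset.Icc 1 n) :
    P.real ({ω | ε (n + 1) ω = true} ∩ {ω | U (n + 1) ω = j}) = p / n := by
  have hind :
      Indep (srwSigma X ε U {.inr (.inl (n + 1))}) (srwSigma X ε U {.inr (.inr (n + 1))}) P :=
    indep_srwSigma h.measurable_srwFun h.indep (by simp)
  have hA : MeasurableSet[srwSigma X ε U {.inr (.inl (n + 1))}] {ω | ε (n + 1) ω = true} :=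
    measurable_ε_srwSigma (Set.mem_singleton _) (measurableSet_singleton true)
  have hB : MeasurableSet[srwSigma X ε U {.inr (.inr (n + 1))}] {ω | U (n + 1) ω = j} :=
    measurable_U_srwSigma (Set.mem_singleton _) (measurableSet_singleton j)
  rw [measureReal_def, (Indep_iff _ _ _).1 hind _ _ hA hB, h.prob_ε _ (by omega),
    h.prob_U _ (by omega) j (by simpa using hj)]
  simp [ENNReal.toReal_mul, hp, div_eq_mul_inv]

lemma setIntegral_Xhat_succ (h : IsStepReinforced P p X ε U Xhat) (hp : 0 ≤ p) {n : ℕ}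
    (hn : 1 ≤ n) {s : Set Ω} (hs : MeasurableSet[srwPast X ε U n] s) :
    ∫ ω in s, Xhat (n + 1) ω ∂P = p / n * ∑ j ∈ Finset.Icc 1 n, ∫ ω in s, Xhat j ω ∂P := by
  have hle := srwSigma_le h.measurable_srwFun
  have hs0 : MeasurableSet s := hle _ _ hs
  set A := {ω | ε (n + 1) ω = true}
  set B := fun j => {ω | U (n + 1) ω = j}
  set C := {ω | ε (n + 1) ω = false}
  have hA : MeasurableSet A := h.measurable_ε _ (measurableSet_singleton true)
  have hB : ∀ j, MeasurableSet (B j) := fun j => h.measurable_U _ (measurableSet_singleton j)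
  have hC : MeasurableSet C := h.measurable_ε _ (measurableSet_singleton false)
  have hpick : ∀ j ∈ Finset.Icc 1 n,
      ∫ ω in s, (A ∩ B j).indicator (Xhat j) ω ∂P = p / n * ∫ ω in s, Xhat j ω ∂P := by
    intro j hj
    obtain ⟨hj1, hjn⟩ := Finset.mem_Icc.1 hj
    have hAB : MeasurableSet[srwSigma X ε U {.inr (.inl (n + 1)), .inr (.inr (n + 1))}]
        (A ∩ B j) :=
      (measurable_ε_srwSigma (by simp) (measurableSet_singleton true)).inter
        (measurable_U_srwSigma (by simp) (measurableSet_singleton j))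
    have hind : Indep (srwSigma X ε U {.inr (.inl (n + 1)), .inr (.inr (n + 1))})
        (srwPast X ε U n) P :=
      indep_srwSigma h.measurable_srwFun h.indep (by simp [srwTime])
    rw [setIntegral_indicator (hle _ _ hAB), Set.inter_comm, ← setIntegral_indicator hs0,
      setIntegral_eq_measureReal_mul_of_indep hind (hle _) (hle _) hAB
        ((h.measurable_Xhat_srwPast hj1 hjn).indicator hs),
      integral_indicator hs0, h.measureReal_ε_inter_U hp hn hj]
  have hfresh : ∫ ω in s, C.indicator (X (n + 1)) ω ∂P = 0 := by
    have hsC :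
        MeasurableSet[srwSigma X ε U ({i | srwTime i ≤ n} ∪ {.inr (.inl (n + 1))})] (s ∩ C) :=
      (srwSigma_mono Set.subset_union_left _ hs).inter
        (measurable_ε_srwSigma (by simp) (measurableSet_singleton false))
    have hind : Indep (srwSigma X ε U ({i | srwTime i ≤ n} ∪ {.inr (.inl (n + 1))}))
        (srwSigma X ε U {.inl (n + 1)}) P :=
      indep_srwSigma h.measurable_srwFun h.indep (by simp [srwTime])
    rw [setIntegral_indicator hC,
      setIntegral_eq_measureReal_mul_of_indep hind (hle _) (hle _) hsC
        (measurable_X_srwSigma (Set.mem_singleton _)),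
      h.integral_X, mul_zero]
  have hint : ∀ j ∈ Finset.Icc 1 n, IntegrableOn ((A ∩ B j).indicator (Xhat j)) s P :=
    fun j hj =>
      ((h.integrable_Xhat (Finset.mem_Icc.1 hj).1).indicator (hA.inter (hB j))).integrableOn
  rw [h.Xhat_eq_sum_indicator (by omega), Nat.add_sub_cancel]
  simp only [Pi.add_apply, Finset.sum_apply]
  rw [integral_add (integrable_finsetSum _ hint) ((h.integrable_X _).indicator hC).integrableOn,
    integral_finsetSum _ hint, hfresh, add_zero, Finset.sum_congr rfl hpick, Finset.mul_sum]

lemma setIntegral_walk_succ (h : IsStepReinforced P p X ε U Xhat) (hp : 0 ≤ p) {n : ℕ}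
    (hn : 1 ≤ n) {s : Set Ω} (hs : MeasurableSet[srwPast X ε U n] s) :
    ∫ ω in s, ∑ i ∈ Finset.Icc 1 (n + 1), Xhat i ω ∂P
      = (n + p) / n * ∫ ω in s, ∑ i ∈ Finset.Icc 1 n, Xhat i ω ∂P := by
  have hint : ∀ m, ∀ i ∈ Finset.Icc 1 m, IntegrableOn (Xhat i) s P :=
    fun _ i hi => (h.integrable_Xhat (Finset.mem_Icc.1 hi).1).integrableOn
  have hn0 : (n : ℝ) ≠ 0 := by positivity
  rw [integral_finsetSum _ (hint _), Finset.sum_Icc_succ_top (by omega),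
    h.setIntegral_Xhat_succ hp hn hs, integral_finsetSum _ (hint _)]
  field_simp

lemma integral_walk (h : IsStepReinforced P p X ε U Xhat) (hp : 0 ≤ p) {n : ℕ} (hn : 1 ≤ n) :
    ∫ ω, ∑ i ∈ Finset.Icc 1 n, Xhat i ω ∂P = 0 := by
  induction n, hn using Nat.le_induction with
  | base => simp [h.Xhat_one, h.integral_X]
  | succ n hn ih =>
    rw [← setIntegral_univ, h.setIntegral_walk_succ hp hn MeasurableSet.univ, setIntegral_univ,
      ih, mul_zero]

lemma integrable_walk (h : IsStepReinforced P p X ε U Xhat) (n : ℕ) :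
    Integrable (fun ω => ∑ i ∈ Finset.Icc 1 n, Xhat i ω) P :=
  integrable_finsetSum _ fun _ hi => h.integrable_Xhat (Finset.mem_Icc.1 hi).1

lemma iSup_comap_Xhat_le_srwPast (h : IsStepReinforced P p X ε U Xhat) (n : ℕ) :
    ⨆ i ∈ Finset.Icc 1 n, MeasurableSpace.comap (Xhat i) inferInstance ≤ srwPast X ε U n :=
  iSup₂_le fun _ hi =>
    (h.measurable_Xhat_srwPast (Finset.mem_Icc.1 hi).1 (Finset.mem_Icc.1 hi).2).comap_le

end IsStepReinforced

lemma Gamma_add_div_Gamma_succ {x : ℝ} (p : ℝ) (hx : x ≠ 0) (hxp : x + p ≠ 0) :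
    Real.Gamma (x + 1 + p) / Real.Gamma (x + 1)
      = (x + p) / x * (Real.Gamma (x + p) / Real.Gamma x) := by
  rw [add_right_comm, Real.Gamma_add_one hxp, Real.Gamma_add_one hx, mul_div_mul_comm]

theorem stmt6_general {Ω : Type*} [m0 : MeasurableSpace Ω] (P : Measure Ω) [IsProbabilityMeasure P]
    (p : ℝ) (hp : p ∈ Set.Ioo (1/2 : ℝ) 1)
    (X : ℕ → Ω → ℝ) (ε : ℕ → Ω → Bool) (U : ℕ → Ω → ℕ) (Xhat : ℕ → Ω → ℝ)
    (hmX : ∀ i, Measurable (X i)) (hmε : ∀ i, Measurable (ε i)) (hmU : ∀ i, Measurable (U i))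
    -- the `X i` are i.i.d., the whole randomness is jointly independent
    (hid : ∀ i, P.map (X i) = P.map (X 1))
    (hindep : iIndepFun (m := fun i => srwSpaceMS ℝ i) (srwFun X ε U) P)
    -- `ε i` is Bernoulli(p) and `U i` is uniform on `{1, …, i-1}`
    (hε : ∀ i, 2 ≤ i → P {ω | ε i ω = true} = ENNReal.ofReal p)
    (hUmem : ∀ i, 2 ≤ i → ∀ ω, U i ω ∈ Finset.Icc 1 (i - 1))
    (hUunif : ∀ i, 2 ≤ i → ∀ j ∈ Finset.Icc 1 (i - 1),
      P {ω | U i ω = j} = ((i - 1 : ℕ) : ENNReal)⁻¹)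
    -- the reinforcement recursion
    (hX1 : Xhat 1 = X 1)
    (hrec : ∀ i, 2 ≤ i → ∀ ω, Xhat i ω = if ε i ω then Xhat (U i ω) ω else X i ω)
    -- the typical step is centered and square-integrable
    (hL2 : MemLp (X 1) 2 P) (hcent : ∫ ω, X 1 ω ∂P = 0)
    -- the walk
    (S : ℕ → Ω → ℝ) (hS : ∀ n ω, S n ω = ∑ i ∈ Finset.Icc 1 n, Xhat i ω)
    -- the natural filtration
    (F : ℕ → MeasurableSpace Ω)
    (hF : ∀ n, F n = ⨆ i ∈ Finset.Icc 1 n, MeasurableSpace.comap (Xhat i) inferInstance)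
    -- the normalizing sequence
    (a : ℕ → ℝ) (ha : ∀ n : ℕ, a n = Real.Gamma (n + p) / (Real.Gamma n * Real.Gamma (p + 1)))
    -- the martingale
    (M : ℕ → Ω → ℝ) (hM : ∀ n ω, M n ω = S n ω / a n)
 :
    (∀ n : ℕ, 1 ≤ n → Measurable[F n] (M n)) ∧
    (∀ n : ℕ, 1 ≤ n → ∫ ω, M n ω ∂P = 0) ∧
    (∀ n : ℕ, 1 ≤ n → P[M (n + 1)|F n] =ᵐ[P] M n) := by
  have hp : 0 < p := by linarith [hp.1]
  have hidX (i : ℕ) : IdentDistrib (X i) (X 1) P P :=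
    ⟨(hmX i).aemeasurable, (hmX 1).aemeasurable, hid i⟩
  have h : IsStepReinforced P p X ε U Xhat :=
    { measurable_X := hmX, measurable_ε := hmε, measurable_U := hmU, indep := hindep,
      integrable_X := fun i => (hidX i).integrable_iff.2 (hL2.integrable one_le_two)
      integral_X := fun i => (hidX i).integral_eq.trans hcent
      prob_ε := hε, U_mem := hUmem, prob_U := hUunif, Xhat_one := hX1, Xhat_rec := hrec }
  have hMeq (n : ℕ) : M n = fun ω => (∑ i ∈ Finset.Icc 1 n, Xhat i ω) / a n :=
    funext fun ω => by rw [hM, hS]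
  have ha_succ (n : ℕ) (hn : 1 ≤ n) : a (n + 1) = (n + p) / n * a n := by
    rw [ha, ha, Nat.cast_succ, div_mul_eq_div_div, div_mul_eq_div_div,
      Gamma_add_div_Gamma_succ p (by positivity) (by positivity), mul_div_assoc]
  have hFle (n : ℕ) : F n ≤ srwPast X ε U n := hF n ▸ h.iSup_comap_Xhat_le_srwPast n
  have hmeas (n : ℕ) : Measurable[F n] (M n) := by
    rw [hMeq, hF]
    exact (Finset.measurable_sum _ fun i hi => measurable_iff_comap_le.2
      (le_iSup₂ (f := fun i _ => MeasurableSpace.comap (Xhat i) inferInstance) i hi)).div_const _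
  have hint (n : ℕ) : Integrable (M n) P := hMeq n ▸ (h.integrable_walk n).div_const _
  refine ⟨fun n _ => hmeas n, fun n hn => ?_, fun n hn => ?_⟩
  · rw [hMeq, integral_div, h.integral_walk hp.le hn, zero_div]
  refine (ae_eq_condExp_of_forall_setIntegral_eq
    ((hFle n).trans (srwSigma_le h.measurable_srwFun _)) (hint _)
    (fun s _ _ => (hint n).integrableOn) (fun s hs _ => ?_)
    (hmeas n).aestronglyMeasurable).symm
  have hn0 : (n : ℝ) ≠ 0 := by positivity
  rw [hMeq, hMeq, integral_div, integral_div, h.setIntegral_walk_succ hp.le hn (hFle n s hs),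
    ha_succ n hn]
  field_simp

theorem stmt6 {Ω : Type*} [m0 : MeasurableSpace Ω] (P : Measure Ω) [IsProbabilityMeasure P]
    (p : ℝ) (hp : p ∈ Set.Ioo (1/2 : ℝ) 1)
    (X : ℕ → Ω → ℝ) (ε : ℕ → Ω → Bool) (U : ℕ → Ω → ℕ) (Xhat : ℕ → Ω → ℝ)
    (hmX : ∀ i, Measurable (X i)) (hmε : ∀ i, Measurable (ε i)) (hmU : ∀ i, Measurable (U i))
    (hmXhat : ∀ i, Measurable (Xhat i))
    -- the `X i` are i.i.d., the whole randomness is jointly independent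
    (hid : ∀ i, P.map (X i) = P.map (X 1))
    (hindep : iIndepFun (m := fun i => srwSpaceMS ℝ i) (srwFun X ε U) P)
    -- `ε i` is Bernoulli(p) and `U i` is uniform on `{1, …, i-1}`
    (hε : ∀ i, 2 ≤ i → P {ω | ε i ω = true} = ENNReal.ofReal p)
    (hUmem : ∀ i, 2 ≤ i → ∀ ω, U i ω ∈ Finset.Icc 1 (i - 1))
    (hUunif : ∀ i, 2 ≤ i → ∀ j ∈ Finset.Icc 1 (i - 1),
      P {ω | U i ω = j} = ((i - 1 : ℕ) : ENNReal)⁻¹)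
    -- the reinforcement recursion
    (hX1 : Xhat 1 = X 1)
    (hrec : ∀ i, 2 ≤ i → ∀ ω, Xhat i ω = if ε i ω then Xhat (U i ω) ω else X i ω)
    -- the typical step is centered and square-integrable
    (hL2 : MemLp (X 1) 2 P) (hcent : ∫ ω, X 1 ω ∂P = 0)
    -- the walk
    (S : ℕ → Ω → ℝ) (hS : ∀ n ω, S n ω = ∑ i ∈ Finset.Icc 1 n, Xhat i ω)
    -- the natural filtration
    (F : ℕ → MeasurableSpace Ω)
    (hF : ∀ n, F n = ⨆ i ∈ Finset.Icc 1 n, MeasurableSpace.comap (Xhat i) inferInstance)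
    -- the normalizing sequence
    (a : ℕ → ℝ) (ha : ∀ n : ℕ, a n = Real.Gamma (n + p) / (Real.Gamma n * Real.Gamma (p + 1)))
    -- the martingale
    (M : ℕ → Ω → ℝ) (hM : ∀ n ω, M n ω = S n ω / a n)
 :
    (∀ n : ℕ, 1 ≤ n → Measurable[F n] (M n)) ∧
    (∀ n : ℕ, 1 ≤ n → ∫ ω, M n ω ∂P = 0) ∧
    (∀ n : ℕ, 1 ≤ n → P[M (n + 1)|F n] =ᵐ[P] M n) :=
  stmt6_general (m0 := m0) P p hp X ε U Xhat hmX hmε hmU hid hindep hε hUmem hUunif hX1 hrec hL2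
    hcent S hS F hF a ha M hM
end
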